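/- If E is a sharply dominating lattice effect algebra, then S(E) is bifull in E. -/

import Mathlib

universe u v

/-- An effect algebra: a partial algebra `(E; ⊕, 0, 1)` with `0 ≠ 1`, where `⊕` is
partially defined (domain `D`), commutative and associative where defined, every
element has a unique orthosupplement (`compl`, skolemizing axiom (Eiii)), and
`1 ⊕ x` defined implies `x = 0`. -/
structure EffectAlgebra (E : Type u) where
  D : E → E → Prop
  oplus : E → E → E
  zero : E
  one : E
  zero_ne_one : zero ≠ one
  D_comm : ∀ x y, D x y → D y x
  oplus_comm : ∀ x y, D x y → oplus x y = oplus y x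
  assoc : ∀ x y z, D x y → D (oplus x y) z →
      D y z ∧ D x (oplus y z) ∧ oplus (oplus x y) z = oplus x (oplus y z)
  assoc' : ∀ x y z, D y z → D x (oplus y z) →
      D x y ∧ D (oplus x y) z ∧ oplus (oplus x y) z = oplus x (oplus y z)
  compl : E → E
  D_compl : ∀ x, D x (compl x)
  oplus_compl : ∀ x, oplus x (compl x) = one
  compl_unique : ∀ x y, D x y → oplus x y = one → y = compl x
  one_max : ∀ x, D one x → x = zero

namespace EffectAlgebra

variable {E : Type u} (A : EffectAlgebra E)

/-- The induced order: `x ≤ y` iff `x ⊕ z = y` for some `z`. -/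
def le (x y : E) : Prop := ∃ z, A.D x z ∧ A.oplus x z = y

def IsLB (S : Set E) (m : E) : Prop := ∀ x ∈ S, A.le m x
def IsUB (S : Set E) (m : E) : Prop := ∀ x ∈ S, A.le x m

/-- `m` is the infimum of `S` computed within the subposet `P`. -/
def IsInfIn (P : Set E) (S : Set E) (m : E) : Prop :=
  m ∈ P ∧ A.IsLB S m ∧ ∀ z ∈ P, A.IsLB S z → A.le z m

/-- `m` is the supremum of `S` computed within the subposet `P`. -/
def IsSupIn (P : Set E) (S : Set E) (m : E) : Prop :=
  m ∈ P ∧ A.IsUB S m ∧ ∀ z ∈ P, A.IsUB S z → A.le m z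

/-- `w` is sharp iff the meet `w ∧ w'` exists in `E` and equals `0`. -/
def Sharp (w : E) : Prop := A.IsInfIn Set.univ {w, A.compl w} A.zero

/-- The set `S(E)` of sharp elements. -/
def sharpSet : Set E := {w | A.Sharp w}

def HasMeet (x y : E) : Prop := ∃ m, A.IsInfIn Set.univ {x, y} m
def HasJoin (x y : E) : Prop := ∃ j, A.IsSupIn Set.univ {x, y} j

/-- Every `x` has a least sharp element above it, which is the infimum of the sharp
elements above `x` both in `E` and in `S(E)`. -/
def SharplyDominating : Prop :=
  ∀ x : E, ∃ w, A.Sharp w ∧ A.le x w ∧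
    A.IsInfIn Set.univ {v | A.Sharp v ∧ A.le x v} w ∧
    A.IsInfIn A.sharpSet {v | A.Sharp v ∧ A.le x v} w

/-- Sharply dominating, and `x ∧ w` exists for every `x ∈ E`, `w ∈ S(E)`. -/
def SDominating : Prop :=
  A.SharplyDominating ∧ ∀ x w : E, A.Sharp w → A.HasMeet x w

end EffectAlgebra

/-- `SumDef A l s` : the orthosum of the finite list `l` is defined and equals `s`. -/
inductive EffectAlgebra.SumDef {E : Type u} (A : EffectAlgebra E) : List E → E → Prop
  | nil : EffectAlgebra.SumDef A [] A.zero
  | cons {x : E} {l : List E} {s : E} : EffectAlgebra.SumDef A l s → A.D x s →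
      EffectAlgebra.SumDef A (x :: l) (A.oplus x s)

namespace EffectAlgebra

variable {E : Type u} (A : EffectAlgebra E)

/-- A family is orthogonal iff every finite subfamily has a defined orthosum. -/
def Orthogonal {ι : Type v} (x : ι → E) : Prop :=
  ∀ l : List ι, l.Nodup → ∃ s, A.SumDef (l.map x) s

/-- The set of finite partial orthosums of a family. -/
def finiteSums {ι : Type v} (x : ι → E) : Set E :=
  {s | ∃ l : List ι, l.Nodup ∧ A.SumDef (l.map x) s}

/-- `v = ⊕ x` : the family is orthogonal and `v` is the supremum in `E` of all
finite partial orthosums. -/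
def HasOrthoSum {ι : Type v} (x : ι → E) (v : E) : Prop :=
  A.Orthogonal x ∧ A.IsSupIn Set.univ (A.finiteSums x) v

/-- Every family dominated elementwise by an orthogonal family of sharp
elements has an orthosum. -/
def SharplyOrthocomplete : Prop :=
  ∀ (ι : Type u) (x w : ι → E), (∀ k, A.Sharp (w k)) → A.Orthogonal w →
    (∀ k, A.le (x k) (w k)) → ∃ v, A.HasOrthoSum x v

/-- `c` is central: for every `y` the meets `y ∧ c`, `y ∧ c'` exist and
`y = (y ∧ c) ∨ (y ∧ c')`. -/
def Central (c : E) : Prop :=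
  ∀ y : E, ∃ m₁ m₂, A.IsInfIn Set.univ {y, c} m₁ ∧
    A.IsInfIn Set.univ {y, A.compl c} m₂ ∧ A.IsSupIn Set.univ {m₁, m₂} y

/-- The center `C(E)`. -/
def centerSet : Set E := {c | A.Central c}

def CentrallyDominating : Prop :=
  ∀ x : E, ∃ c, A.Central c ∧ A.le x c ∧
    A.IsInfIn Set.univ {d | A.Central d ∧ A.le x d} c ∧
    A.IsInfIn A.centerSet {d | A.Central d ∧ A.le x d} c

def CentrallyOrthocomplete : Prop :=
  ∀ (ι : Type u) (x c : ι → E), (∀ k, A.Central (c k)) → A.Orthogonal c →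
    (∀ k, A.le (x k) (c k)) → ∃ v, A.HasOrthoSum x v

/-- `P` is bifull in `E`: for `S ⊆ P`, the join of `S` in `P` exists iff the join
of `S` in `E` exists, and then they coincide. -/
def Bifull (P : Set E) : Prop :=
  ∀ S ⊆ P, (∀ s, A.IsSupIn P S s → A.IsSupIn Set.univ S s) ∧
    (∀ s, A.IsSupIn Set.univ S s → A.IsSupIn P S s)

/-- The subposet `P` is a complete lattice: every subset of `P` has a supremum
(and an infimum) computed within `P`. -/
def CompleteIn (P : Set E) : Prop :=
  ∀ S ⊆ P, (∃ s, A.IsSupIn P S s) ∧ (∃ m, A.IsInfIn P S m)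

/-- `E` is a complete lattice. -/
def Complete : Prop :=
  ∀ S : Set E, (∃ s, A.IsSupIn Set.univ S s) ∧ (∃ m, A.IsInfIn Set.univ S m)

/-- The induced order of `E` is a lattice. -/
def LatticeOrdered : Prop := ∀ x y : E, A.HasMeet x y ∧ A.HasJoin x y

/-- `x ↔ y` : `x ∨ y = x ⊕ (y ⊖ (x ∧ y))`. -/
def Compatible (x y : E) : Prop :=
  ∃ m j z, A.IsInfIn Set.univ {x, y} m ∧ A.IsSupIn Set.univ {x, y} j ∧
    A.D m z ∧ A.oplus m z = y ∧ A.D x z ∧ A.oplus x z = j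

/-- An MV-effect algebra: a lattice effect algebra all of whose pairs of elements
are compatible. -/
def MV : Prop := A.LatticeOrdered ∧ ∀ x y : E, A.Compatible x y

/-- `nx = x ⊕ ⋯ ⊕ x` (`n` times) is defined. -/
def nTimesDef (n : ℕ) (x : E) : Prop := ∃ s, A.SumDef (List.replicate n x) s

/-- `ord x < ∞` for every nonzero `x`. -/
def IsArchimedean : Prop := ∀ x : E, x ≠ A.zero → ∃ n : ℕ, ¬ A.nTimesDef n x

def Atom (a : E) : Prop := a ≠ A.zero ∧ ∀ b, A.le b a → b = A.zero ∨ b = a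

def Atomic : Prop := ∀ x : E, x ≠ A.zero → ∃ a, A.Atom a ∧ A.le a x

/-- The subposet `P` (closed under `'`) is an orthomodular lattice. -/
def OrthomodularIn (P : Set E) : Prop :=
  (∀ x ∈ P, ∀ y ∈ P, (∃ m, A.IsInfIn P {x, y} m) ∧ (∃ j, A.IsSupIn P {x, y} j)) ∧
  A.zero ∈ P ∧ A.one ∈ P ∧ (∀ x ∈ P, A.compl x ∈ P) ∧
  (∀ x ∈ P, A.IsInfIn P {x, A.compl x} A.zero ∧ A.IsSupIn P {x, A.compl x} A.one) ∧
  (∀ x ∈ P, ∀ y ∈ P, A.le x y →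
    ∃ m, A.IsInfIn P {y, A.compl x} m ∧ A.IsSupIn P {x, m} y)

def DistributiveIn (P : Set E) : Prop :=
  ∀ x ∈ P, ∀ y ∈ P, ∀ z ∈ P, ∀ jyz mxy mxz m : E,
    A.IsSupIn P {y, z} jyz → A.IsInfIn P {x, y} mxy → A.IsInfIn P {x, z} mxz →
    A.IsInfIn P {x, jyz} m → A.IsSupIn P {mxy, mxz} m

/-- The subposet `P` is a Boolean algebra (complemented distributive lattice with
bounds, complement given by `'`). -/
def BooleanIn (P : Set E) : Prop :=
  (∀ x ∈ P, ∀ y ∈ P, (∃ m, A.IsInfIn P {x, y} m) ∧ (∃ j, A.IsSupIn P {x, y} j)) ∧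
  A.zero ∈ P ∧ A.one ∈ P ∧ (∀ x ∈ P, A.compl x ∈ P) ∧
  (∀ x ∈ P, A.IsInfIn P {x, A.compl x} A.zero ∧ A.IsSupIn P {x, A.compl x} A.one) ∧
  A.DistributiveIn P

/-- A block: a maximal set of pairwise compatible elements. -/
def Block (M : Set E) : Prop :=
  (∀ x ∈ M, ∀ y ∈ M, A.Compatible x y) ∧
  ∀ N : Set E, M ⊆ N → (∀ x ∈ N, ∀ y ∈ N, A.Compatible x y) → N = M

def AtomIn (M : Set E) (a : E) : Prop :=
  a ∈ M ∧ a ≠ A.zero ∧ ∀ b ∈ M, A.le b a → b = A.zero ∨ b = a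

def AtomicIn (M : Set E) : Prop :=
  ∀ x ∈ M, x ≠ A.zero → ∃ a, A.AtomIn M a ∧ A.le a x

end EffectAlgebra

/-!
A supremum computed among sharp elements is also the supremum in `E`: if `z` bounds a set `S`
of sharp elements, the least sharp element `v` above `z'` satisfies `v ≤ x'` for all `x ∈ S`,
so `v'` is a sharp upper bound of `S` below `z`.

Conversely let `s = ⋁ S` in `E`, let `w = s ⊕ t` be the least sharp element above `s` and `v`
the least sharp element above `t`. In a lattice effect algebra, if `a ⊕ c = b` with `a, b`
sharp then `c` is sharp. Hence `w ⊖ x ≥ v` is sharp for every `x ∈ S`, so `w ⊖ v` bounds `S`,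
so `s ≤ w ⊖ v`, i.e. `v ≤ t`. Thus `t = v` is sharp, and so is `s = w ⊖ t`.
-/

namespace EffectAlgebra

variable {E : Type u} {A : EffectAlgebra E}

theorem compl_compl (x : E) : A.compl (A.compl x) = x := by
  have hD := A.D_comm _ _ (A.D_compl x)
  refine (A.compl_unique _ _ hD ?_).symm
  rw [← A.oplus_comm x _ (A.D_compl x), A.oplus_compl]

theorem oplus_left_cancel {x a b : E} (ha : A.D x a) (hb : A.D x b)
    (h : A.oplus x a = A.oplus x b) : a = b := by
  set c := A.compl (A.oplus x a)
  have hc : A.D c (A.oplus x a) := A.D_comm _ _ (A.D_compl _)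
  have hc1 : A.oplus c (A.oplus x a) = A.one := by
    rw [← A.oplus_comm _ _ (A.D_compl _), A.oplus_compl]
  obtain ⟨-, hca, hassoc_a⟩ := A.assoc' c x a ha hc
  obtain ⟨-, hcb, hassoc_b⟩ := A.assoc' c x b hb (h ▸ hc)
  rw [A.compl_unique _ _ hca (by rw [hassoc_a, hc1]),
    A.compl_unique _ _ hcb (by rw [hassoc_b, ← h, hc1])]

theorem compl_one : A.compl A.one = A.zero := A.one_max _ (A.D_compl A.one)

theorem D_zero_and_oplus_zero (x : E) : A.D x A.zero ∧ A.oplus x A.zero = x := by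
  suffices h : ∀ y : E, A.D (A.compl y) A.zero ∧ A.oplus (A.compl y) A.zero = A.compl y by
    simpa only [compl_compl] using h (A.compl x)
  intro y
  have hD : A.D (A.oplus y (A.compl y)) A.zero := by
    rw [A.oplus_compl, ← compl_one]; exact A.D_compl _
  obtain ⟨hD', hD'', hassoc⟩ := A.assoc y (A.compl y) A.zero (A.D_compl y) hD
  refine ⟨hD', oplus_left_cancel hD'' (A.D_compl y) ?_⟩
  rw [← hassoc, A.oplus_compl, ← compl_one, A.oplus_compl]

theorem le_refl (x : E) : A.le x x := ⟨A.zero, D_zero_and_oplus_zero x⟩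

theorem zero_le (x : E) : A.le A.zero x := by
  obtain ⟨hD, hx⟩ := D_zero_and_oplus_zero (A := A) x
  exact ⟨x, A.D_comm _ _ hD, by rw [← A.oplus_comm _ _ hD, hx]⟩

theorem le_trans {x y z : E} (hxy : A.le x y) (hyz : A.le y z) : A.le x z := by
  obtain ⟨a, hDa, rfl⟩ := hxy
  obtain ⟨b, hDb, rfl⟩ := hyz
  obtain ⟨-, hD, hassoc⟩ := A.assoc x a b hDa hDb
  exact ⟨_, hD, hassoc.symm⟩

theorem eq_zero_of_le_zero {z : E} (h : A.le z A.zero) : z = A.zero := by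
  obtain ⟨e, hD, hze⟩ := h
  have hD1 : A.D (A.oplus z e) A.one := by
    rw [hze, ← compl_one]; exact A.D_comm _ _ (A.D_compl _)
  obtain ⟨he1, -, -⟩ := A.assoc z e A.one hD hD1
  rw [← hze, A.one_max e (A.D_comm _ _ he1), (D_zero_and_oplus_zero z).2]

theorem le_antisymm {x y : E} (hxy : A.le x y) (hyx : A.le y x) : x = y := by
  obtain ⟨a, hDa, rfl⟩ := hxy
  obtain ⟨b, hDb, hb⟩ := hyx
  obtain ⟨hab, hD, hassoc⟩ := A.assoc x a b hDa hDb
  have h0 : A.oplus a b = A.zero := oplus_left_cancel hD (D_zero_and_oplus_zero x).1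
    (by rw [← hassoc, hb, (D_zero_and_oplus_zero x).2])
  rw [eq_zero_of_le_zero ⟨b, hab, h0⟩, (D_zero_and_oplus_zero x).2]

theorem le_oplus_left {x y : E} (hD : A.D x y) : A.le x (A.oplus x y) := ⟨y, hD, rfl⟩

theorem le_oplus_right {x y : E} (hD : A.D x y) : A.le y (A.oplus x y) :=
  ⟨x, A.D_comm _ _ hD, (A.oplus_comm _ _ hD).symm⟩

theorem oplus_compl_of_oplus_eq {a b c : E} (hD : A.D a b) (h : A.oplus a b = c) :
    A.D b (A.compl c) ∧ A.oplus b (A.compl c) = A.compl a := by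
  obtain ⟨hD', hD'', hassoc⟩ := A.assoc a b (A.compl c) hD (h ▸ A.D_compl c)
  exact ⟨hD', A.compl_unique a _ hD'' (by rw [← hassoc, h, A.oplus_compl])⟩

theorem compl_le_compl {x y : E} (h : A.le x y) : A.le (A.compl y) (A.compl x) := by
  obtain ⟨a, hD, hxa⟩ := h
  obtain ⟨hD', ha⟩ := oplus_compl_of_oplus_eq hD hxa
  exact ⟨a, A.D_comm _ _ hD', by rw [← A.oplus_comm _ _ hD', ha]⟩

theorem le_compl_comm {x y : E} (h : A.le x (A.compl y)) : A.le y (A.compl x) := by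
  simpa only [compl_compl] using compl_le_compl h

theorem D_of_le_compl {a b : E} (h : A.le a (A.compl b)) : A.D a b := by
  obtain ⟨e, hD, hae⟩ := h
  obtain ⟨heb, hD', -⟩ := A.assoc a e b hD (hae ▸ A.D_comm _ _ (A.D_compl b))
  exact (A.assoc' a b e (A.D_comm _ _ heb) (A.oplus_comm _ _ heb ▸ hD')).1

theorem le_of_oplus_le_oplus_left {x a b : E} (ha : A.D x a) (hb : A.D x b)
    (h : A.le (A.oplus x a) (A.oplus x b)) : A.le a b := by
  obtain ⟨r, hDr, hxar⟩ := h
  obtain ⟨har, hD, hassoc⟩ := A.assoc x a r ha hDr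
  exact ⟨r, har, oplus_left_cancel hD hb (hassoc ▸ hxar)⟩

/-- The difference `b ⊖ a` is antitone in `a`. -/
theorem le_of_oplus_eq_oplus {a b c d : E} (hab : A.D a b) (hcd : A.D c d)
    (h : A.oplus a b = A.oplus c d) (hac : A.le a c) : A.le d b := by
  obtain ⟨k, hak, rfl⟩ := hac
  obtain ⟨hkd, hD, hassoc⟩ := A.assoc a k d hak hcd
  refine ⟨k, A.D_comm _ _ hkd, ?_⟩
  rw [← A.oplus_comm _ _ hkd]
  exact oplus_left_cancel hD hab (hassoc ▸ h.symm)

theorem Sharp.eq_zero {w z : E} (hw : A.Sharp w) (h : A.le z w) (h' : A.le z (A.compl w)) :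
    z = A.zero := by
  refine eq_zero_of_le_zero (hw.2.2 z trivial ?_)
  rintro x (rfl | rfl)
  exacts [h, h']

theorem sharp_of_forall_eq_zero {w : E}
    (h : ∀ z, A.le z w → A.le z (A.compl w) → z = A.zero) : A.Sharp w := by
  refine ⟨trivial, fun x _ => zero_le x, fun z _ hz => ?_⟩
  rw [h z (hz _ (Or.inl rfl)) (hz _ (Or.inr rfl))]
  exact le_refl _

theorem Sharp.compl {w : E} (hw : A.Sharp w) : A.Sharp (A.compl w) :=
  sharp_of_forall_eq_zero fun _ h h' => hw.eq_zero (compl_compl w ▸ h') h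

/-- If `z ≤ (x ⊕ y)'`, then `x ⊕ ((z ∨ x) ⊖ x)` is below `x ⊕ z` and `x ⊕ y`, so `(z ∨ x) ⊖ x`
lies below `y` and `z ≤ y'`; hence it vanishes, `z ≤ x`, and `z = 0`. -/
theorem Sharp.oplus (hJ : ∀ a b : E, A.HasJoin a b) {x y : E} (hx : A.Sharp x)
    (hy : A.Sharp y) (hD : A.D x y) : A.Sharp (A.oplus x y) := by
  refine sharp_of_forall_eq_zero fun z hzu hzu' => ?_
  have hzx' : A.le z (A.compl x) := le_trans hzu' (compl_le_compl (le_oplus_left hD))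
  have hzy' : A.le z (A.compl y) := le_trans hzu' (compl_le_compl (le_oplus_right hD))
  have hDxz : A.D x z := A.D_comm _ _ (D_of_le_compl hzx')
  obtain ⟨j, -, hjub, hjleast⟩ := hJ z x
  obtain ⟨d, hDxd, hxd⟩ := hjub x (Or.inr rfl)
  have hj_le : ∀ v, A.le z v → A.le x v → A.le j v := fun v hz hx =>
    hjleast v trivial (by rintro w (rfl | rfl); exacts [hz, hx])
  have hdz : A.le d z := le_of_oplus_le_oplus_left hDxd hDxz
    (hxd ▸ hj_le _ (le_oplus_right hDxz) (le_oplus_left hDxz))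
  have hdy : A.le d y := le_of_oplus_le_oplus_left hDxd hD
    (hxd ▸ hj_le _ hzu (le_oplus_left hD))
  have hd : d = A.zero := hy.eq_zero hdy (le_trans hdz hzy')
  have hjx : j = x := by rw [← hxd, hd, (D_zero_and_oplus_zero x).2]
  exact hx.eq_zero (hjx ▸ hjub z (Or.inl rfl)) hzx'

theorem Sharp.of_oplus_eq (hJ : ∀ a b : E, A.HasJoin a b) {a b c : E} (ha : A.Sharp a)
    (hb : A.Sharp b) (hD : A.D a c) (h : A.oplus a c = b) : A.Sharp c := by
  obtain ⟨hcb, hcb'⟩ := oplus_compl_of_oplus_eq hD h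
  obtain ⟨hba, hba'⟩ := oplus_compl_of_oplus_eq hcb hcb'
  rw [compl_compl] at hba hba'
  have hc' : A.Sharp (A.compl c) := hba' ▸ hb.compl.oplus hJ ha hba
  simpa only [compl_compl] using hc'.compl

theorem SharplyDominating.exists_least_sharp_ge (hSD : A.SharplyDominating) (x : E) :
    ∃ w, A.Sharp w ∧ A.le x w ∧ ∀ v, A.Sharp v → A.le x v → A.le w v := by
  obtain ⟨w, hw, hxw, ⟨-, hlb, -⟩, -⟩ := hSD x
  exact ⟨w, hw, hxw, fun v hv hxv => hlb v ⟨hv, hxv⟩⟩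

variable {S : Set E} {s : E}

theorem SharplyDominating.isSupIn_univ (hSD : A.SharplyDominating) (hS : S ⊆ A.sharpSet)
    (h : A.IsSupIn A.sharpSet S s) : A.IsSupIn Set.univ S s := by
  refine ⟨trivial, h.2.1, fun z _ hz => ?_⟩
  obtain ⟨v, hv, hzv, hv_least⟩ := hSD.exists_least_sharp_ge (A.compl z)
  have hub : A.IsUB S (A.compl v) := fun x hx =>
    le_compl_comm (hv_least _ (hS hx).compl (compl_le_compl (hz x hx)))
  exact le_trans (h.2.2 _ hv.compl hub) (compl_compl z ▸ compl_le_compl hzv)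

theorem SharplyDominating.sharp_of_isSupIn_univ (hJ : ∀ a b : E, A.HasJoin a b)
    (hSD : A.SharplyDominating) (hS : S ⊆ A.sharpSet) (h : A.IsSupIn Set.univ S s) :
    A.Sharp s := by
  obtain ⟨w, hw, ⟨t, hDst, hst⟩, -⟩ := hSD.exists_least_sharp_ge s
  obtain ⟨v, hv, htv, hv_least⟩ := hSD.exists_least_sharp_ge t
  obtain ⟨u, hDvu, hvu⟩ := hv_least w hw (hst ▸ le_oplus_right hDst)
  have hu : A.IsUB S u := by
    intro x hx
    obtain ⟨e, hDxe, hxe⟩ := h.2.1 x hx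
    obtain ⟨het, hD, hassoc⟩ := A.assoc x e t hDxe (hxe ▸ hDst)
    have hxr : A.oplus x (A.oplus e t) = w := by rw [← hassoc, hxe, hst]
    have hr : A.Sharp (A.oplus e t) := (hS hx).of_oplus_eq hJ hw hD hxr
    refine le_of_oplus_eq_oplus hDvu (A.D_comm _ _ hD) ?_ (hv_least _ hr (le_oplus_right het))
    rw [hvu, ← hxr, A.oplus_comm _ _ hD]
  have hvt : A.le v t :=
    le_of_oplus_eq_oplus hDst (A.D_comm _ _ hDvu) (by rw [hst, ← hvu, A.oplus_comm _ _ hDvu])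
      (h.2.2 u trivial hu)
  have ht : A.Sharp t := le_antisymm htv hvt ▸ hv
  exact ht.of_oplus_eq hJ hw (A.D_comm _ _ hDst) (by rw [← A.oplus_comm _ _ hDst, hst])

theorem SharplyDominating.isSupIn_sharpSet (hJ : ∀ a b : E, A.HasJoin a b)
    (hSD : A.SharplyDominating) (hS : S ⊆ A.sharpSet) (h : A.IsSupIn Set.univ S s) :
    A.IsSupIn A.sharpSet S s :=
  ⟨hSD.sharp_of_isSupIn_univ hJ hS h, h.2.1, fun z _ hz => h.2.2 z trivial hz⟩

end EffectAlgebra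

/-- If `E` is a sharply dominating lattice effect algebra then `S(E)` is bifull
in `E`. -/
theorem stmt7 {E : Type u} (A : EffectAlgebra E) (hL : A.LatticeOrdered)
    (hSD : A.SharplyDominating) :
    A.Bifull A.sharpSet := by
  have hJ : ∀ a b : E, A.HasJoin a b := fun a b => (hL a b).2
  intro S hS
  exact ⟨fun _ => hSD.isSupIn_univ hS, fun _ => hSD.isSupIn_sharpSet hJ hS⟩
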